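/- arXiv:2006.04174 — 2 statements merged into one kernel-verified Lean document; each statement's English description precedes it below -/
import Mathlib

section
/- Let V be a Hilbert space, V_n and W_m finite-dimensional subspaces with β(V_n,W_m) > 0, and ω ∈ W_m. Then the minimization problem min over u ∈ ω + W_m^⊥ of dist(u, V_n) is equivalent to the least-squares problem min over v ∈ V_n of ‖ω − P_{W_m} v‖; more precisely, for u = ω + η with η ∈ W_m^⊥, min_{η ∈ W_m^⊥} min_{v∈V_n} ‖ω + η − v‖² = min_{v∈V_n} ‖ω − P_{W_m} v‖². -/
/-!
The vector `ω + η - v` splits orthogonally as `(ω - P v) + (η - (v - P v))` along `Wm ⊕ Wmᗮ`, so its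
squared norm is `‖ω - P v‖² + ‖η - (v - P v)‖²`. The second term is nonnegative and vanishes for
`η = v - P v ∈ Wmᗮ`, hence the double infimum equals the least-squares one.
-/

theorem ciInf_ciInf_add_eq_ciInf {ι κ : Type*} [Nonempty ι] [Nonempty κ]
    (f : κ → ℝ) (g : ι → κ → ℝ) (hf : BddBelow (Set.range f))
    (hg : ∀ i k, 0 ≤ g i k) (hg_zero : ∀ k, ∃ i, g i k = 0) :
    ⨅ i, ⨅ k, (f k + g i k) = ⨅ k, f k := by
  obtain ⟨c, hc⟩ := hf
  have hfg : ∀ i, BddBelow (Set.range fun k => f k + g i k) := fun i =>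
    ⟨c, by rintro _ ⟨k, rfl⟩; linarith [hc ⟨k, rfl⟩, hg i k]⟩
  have hinf : BddBelow (Set.range fun i => ⨅ k, (f k + g i k)) :=
    ⟨c, by rintro _ ⟨i, rfl⟩; exact le_ciInf fun k => by linarith [hc ⟨k, rfl⟩, hg i k]⟩
  refine le_antisymm (le_ciInf fun k => ?_) (le_ciInf fun i => le_ciInf fun k => ?_)
  · obtain ⟨i, hi⟩ := hg_zero k
    exact ciInf_le_of_le hinf i (ciInf_le_of_le (hfg i) k (by rw [hi, add_zero]))
  · exact ciInf_le_of_le ⟨c, hc⟩ k (le_add_of_nonneg_right (hg i k))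

theorem Submodule.norm_add_sub_sq_eq_of_mem_orthogonal {V : Type*} [NormedAddCommGroup V]
    [InnerProductSpace ℝ V] (K : Submodule ℝ V) [K.HasOrthogonalProjection]
    {ω η : V} (hω : ω ∈ K) (hη : η ∈ Kᗮ) (x : V) :
    ‖ω + η - x‖ ^ 2 = ‖ω - (K.orthogonalProjectionOnto x : V)‖ ^ 2
      + ‖η - (x - (K.orthogonalProjectionOnto x : V))‖ ^ 2 := by
  have hK : ω - (K.orthogonalProjectionOnto x : V) ∈ K :=
    K.sub_mem hω (K.orthogonalProjectionOnto x).2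
  have hKperp : η - (x - (K.orthogonalProjectionOnto x : V)) ∈ Kᗮ :=
    Kᗮ.sub_mem hη (K.sub_starProjection_mem_orthogonal x)
  have hsplit : ω + η - x = (ω - (K.orthogonalProjectionOnto x : V))
      + (η - (x - (K.orthogonalProjectionOnto x : V))) := by abel
  rw [hsplit, norm_add_sq_real, K.inner_right_of_mem_orthogonal hK hKperp, mul_zero, add_zero]

theorem pbdw_min_eq_least_squares_general
    {V : Type*} [NormedAddCommGroup V] [InnerProductSpace ℝ V]
    (Vn Wm : Submodule ℝ V) [FiniteDimensional ℝ Wm]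
    (ω : V) (hω : ω ∈ Wm) :
    (⨅ η : Wmᗮ, ⨅ v : Vn, ‖ω + (η : V) - (v : V)‖ ^ 2)
      = ⨅ v : Vn, ‖ω - (Submodule.orthogonalProjectionOnto Wm (v : V) : V)‖ ^ 2 := by
  simp_rw [Wm.norm_add_sub_sq_eq_of_mem_orthogonal hω (Subtype.prop _)]
  refine ciInf_ciInf_add_eq_ciInf _ _ ⟨0, ?_⟩ (fun _ _ => by positivity) fun v => ?_
  · rintro _ ⟨v, rfl⟩
    positivity
  · exact ⟨⟨_, Wm.sub_starProjection_mem_orthogonal (v : V)⟩, by simp⟩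

/-- The PBDW minimization over the affine set `ω + Wₘ^⊥` is equivalent to the
least-squares problem `min_{v ∈ Vₙ} ‖ω − P_{Wₘ} v‖²`. -/
theorem pbdw_min_eq_least_squares
    {V : Type*} [NormedAddCommGroup V] [InnerProductSpace ℝ V] [CompleteSpace V]
    (Vn Wm : Submodule ℝ V) [FiniteDimensional ℝ Vn] [FiniteDimensional ℝ Wm]
    (hβ : 0 < ⨅ v : {v : Vn // (v : V) ≠ 0},
        ‖(Submodule.orthogonalProjectionOnto Wm (v : V) : V)‖ / ‖(v : V)‖)
    (ω : V) (hω : ω ∈ Wm) :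
    (⨅ η : Wmᗮ, ⨅ v : Vn, ‖ω + (η : V) - (v : V)‖ ^ 2)
      = ⨅ v : Vn, ‖ω - (Submodule.orthogonalProjectionOnto Wm (v : V) : V)‖ ^ 2 :=
  pbdw_min_eq_least_squares_general Vn Wm ω hω
end

section
/- Let V be a Hilbert space, V_n and W_m finite-dimensional subspaces with β(V_n, W_m) > 0, and ω ∈ W_m. Define v* = (P_{V_n|W_m} P_{W_m|V_n})^{-1} P_{V_n|W_m}(ω) and u* = v* + ω − P_{W_m} v*. Then u* is the unique minimizer of dist(u, V_n) over the affine set u ∈ ω + W_m^⊥. -/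
/-!
Write `z = ω - P_{Wₘ} v*`. The normal equations say exactly that `z ⊥ Vₙ`, so `P_{Vₙ} u* = v*`
and the residual of `u*` is `z ∈ Wₘ`. For any `u` in the affine set, `d = u - u*` lies in `Wₘ^⊥`,
hence its residual `d - P_{Vₙ} d` is orthogonal to `z`, and Pythagoras gives
`dist(u, Vₙ)² = dist(u*, Vₙ)² + dist(d, Vₙ)²`. Equality forces `d ∈ Vₙ ∩ Wₘ^⊥`, which is `{0}`
as soon as the inf-sup constant is positive.
-/

open Submodule

section ProjectionResidual

variable {𝕜 E : Type*} [RCLike 𝕜] [NormedAddCommGroup E] [InnerProductSpace 𝕜 E]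

local notation "⟪" x ", " y "⟫" => inner 𝕜 x y

noncomputable def infSupConstant (K W : Submodule 𝕜 E) [W.HasOrthogonalProjection] : ℝ :=
  ⨅ v : {v : K // (v : E) ≠ 0}, ‖(W.orthogonalProjectionOnto (v : E) : E)‖ / ‖(v : E)‖

theorem eq_zero_of_mem_of_mem_orthogonal_of_infSupConstant_pos {K W : Submodule 𝕜 E}
    [W.HasOrthogonalProjection] (hβ : 0 < infSupConstant K W) {v : E} (hvK : v ∈ K)
    (hvW : v ∈ Wᗮ) : v = 0 := by
  by_contra hv
  have hbdd : BddBelow (Set.range fun v : {v : K // (v : E) ≠ 0} =>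
      ‖(W.orthogonalProjectionOnto (v : E) : E)‖ / ‖(v : E)‖) :=
    ⟨0, by rintro _ ⟨v, rfl⟩; positivity⟩
  have hle := ciInf_le hbdd ⟨⟨v, hvK⟩, hv⟩
  simp only [orthogonalProjectionOnto_apply_of_mem_orthogonal hvW, ZeroMemClass.coe_zero,
    norm_zero, zero_div] at hle
  exact hle.not_gt hβ

section Residual

variable {K W : Submodule 𝕜 E} [K.HasOrthogonalProjection] {u₀ u : E}

theorem norm_sub_starProjection_sq_eq_add_of_sub_mem_orthogonal
    (h₀ : u₀ - K.starProjection u₀ ∈ W) (h : u - u₀ ∈ Wᗮ) :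
    ‖u - K.starProjection u‖ ^ 2 =
      ‖u₀ - K.starProjection u₀‖ ^ 2 + ‖(u - u₀) - K.starProjection (u - u₀)‖ ^ 2 := by
  have hsplit : u - K.starProjection u =
      (u₀ - K.starProjection u₀) + ((u - u₀) - K.starProjection (u - u₀)) := by
    rw [map_sub]; abel
  have horth : ⟪u₀ - K.starProjection u₀, (u - u₀) - K.starProjection (u - u₀)⟫ = 0 := by
    rw [inner_sub_right, inner_right_of_mem_orthogonal h₀ h,
      inner_left_of_mem_orthogonal (K.starProjection_apply_mem _)
        (K.sub_starProjection_mem_orthogonal u₀), sub_zero]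
  rw [hsplit, sq, sq, sq, norm_add_sq_eq_norm_sq_add_norm_sq_of_inner_eq_zero _ _ horth]

theorem norm_sub_starProjection_le_of_sub_mem_orthogonal
    (h₀ : u₀ - K.starProjection u₀ ∈ W) (h : u - u₀ ∈ Wᗮ) :
    ‖u₀ - K.starProjection u₀‖ ≤ ‖u - K.starProjection u‖ := by
  rw [← pow_le_pow_iff_left₀ (norm_nonneg _) (norm_nonneg _) two_ne_zero,
    norm_sub_starProjection_sq_eq_add_of_sub_mem_orthogonal h₀ h]
  exact le_add_of_nonneg_right (sq_nonneg _)

theorem sub_mem_of_norm_sub_starProjection_eq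
    (h₀ : u₀ - K.starProjection u₀ ∈ W) (h : u - u₀ ∈ Wᗮ)
    (heq : ‖u - K.starProjection u‖ = ‖u₀ - K.starProjection u₀‖) : u - u₀ ∈ K := by
  have hsq := norm_sub_starProjection_sq_eq_add_of_sub_mem_orthogonal h₀ h
  rw [heq, left_eq_add, sq_eq_zero_iff, norm_eq_zero, sub_eq_zero] at hsq
  exact starProjection_eq_self_iff.mp hsq.symm

end Residual

end ProjectionResidual

theorem pbdw_explicit_unique_minimizer_general
    {V : Type*} [NormedAddCommGroup V] [InnerProductSpace ℝ V]
    (Vn Wm : Submodule ℝ V) [FiniteDimensional ℝ Vn] [FiniteDimensional ℝ Wm]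
    (hβ : 0 < ⨅ v : {v : Vn // (v : V) ≠ 0},
        ‖(Submodule.orthogonalProjectionOnto Wm (v : V) : V)‖ / ‖(v : V)‖)
    (ω : V) (hω : ω ∈ Wm)
    (vstar : Vn)
    (hvstar : Submodule.orthogonalProjectionOnto Vn ((Submodule.orthogonalProjectionOnto Wm ((vstar : V)) : V))
        = Submodule.orthogonalProjectionOnto Vn ω)
    (ustar : V)
    (hustar : ustar = (vstar : V) + ω - (Submodule.orthogonalProjectionOnto Wm (vstar : V) : V)) :
    (ustar - ω ∈ Wmᗮ) ∧
    (∀ u : V, u - ω ∈ Wmᗮ →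
      ‖ustar - (Submodule.orthogonalProjectionOnto Vn ustar : V)‖
        ≤ ‖u - (Submodule.orthogonalProjectionOnto Vn u : V)‖) ∧
    (∀ u : V, u - ω ∈ Wmᗮ →
      ‖u - (Submodule.orthogonalProjectionOnto Vn u : V)‖
        = ‖ustar - (Submodule.orthogonalProjectionOnto Vn ustar : V)‖ → u = ustar) := by
  simp only [coe_orthogonalProjectionOnto_apply] at hustar ⊢
  have hzVn : ω - Wm.starProjection vstar ∈ Vnᗮ := by
    rw [← orthogonalProjectionOnto_eq_zero_iff, map_sub, sub_eq_zero]
    exact hvstar.symm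
  have hres : ustar - Vn.starProjection ustar = ω - Wm.starProjection vstar := by
    rw [eq_starProjection_of_mem_orthogonal' vstar.2 hzVn (hustar.trans (add_sub_assoc _ _ _)),
      hustar, add_sub_assoc, add_sub_cancel_left]
  have hfeas : ustar - ω ∈ Wmᗮ := by
    rw [hustar, add_sub_right_comm, add_sub_cancel_right]
    exact Wm.sub_starProjection_mem_orthogonal _
  have h₀ : ustar - Vn.starProjection ustar ∈ Wm :=
    hres ▸ Wm.sub_mem hω (Wm.starProjection_apply_mem _)
  have hdiff : ∀ u, u - ω ∈ Wmᗮ → u - ustar ∈ Wmᗮ := fun u hu => by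
    simpa only [sub_sub_sub_cancel_right] using Wmᗮ.sub_mem hu hfeas
  refine ⟨hfeas, fun u hu => norm_sub_starProjection_le_of_sub_mem_orthogonal h₀ (hdiff u hu),
    fun u hu heq => sub_eq_zero.mp ?_⟩
  exact eq_zero_of_mem_of_mem_orthogonal_of_infSupConstant_pos hβ
    (sub_mem_of_norm_sub_starProjection_eq h₀ (hdiff u hu) heq) (hdiff u hu)

/-- Explicit expression of the PBDW reconstruction: if `v*` solves the normal
equations `P_{Vₙ|Wₘ} P_{Wₘ|Vₙ} v* = P_{Vₙ|Wₘ} ω` then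
`u* = v* + ω − P_{Wₘ} v*` is the unique minimizer of `dist(·, Vₙ)` over
the affine set `ω + Wₘ^⊥`. -/
theorem pbdw_explicit_unique_minimizer
    {V : Type*} [NormedAddCommGroup V] [InnerProductSpace ℝ V] [CompleteSpace V]
    (Vn Wm : Submodule ℝ V) [FiniteDimensional ℝ Vn] [FiniteDimensional ℝ Wm]
    (hβ : 0 < ⨅ v : {v : Vn // (v : V) ≠ 0},
        ‖(Submodule.orthogonalProjectionOnto Wm (v : V) : V)‖ / ‖(v : V)‖)
    (ω : V) (hω : ω ∈ Wm)
    (vstar : Vn)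
    (hvstar : Submodule.orthogonalProjectionOnto Vn ((Submodule.orthogonalProjectionOnto Wm ((vstar : V)) : V))
        = Submodule.orthogonalProjectionOnto Vn ω)
    (ustar : V)
    (hustar : ustar = (vstar : V) + ω - (Submodule.orthogonalProjectionOnto Wm (vstar : V) : V)) :
    (ustar - ω ∈ Wmᗮ) ∧
    (∀ u : V, u - ω ∈ Wmᗮ →
      ‖ustar - (Submodule.orthogonalProjectionOnto Vn ustar : V)‖
        ≤ ‖u - (Submodule.orthogonalProjectionOnto Vn u : V)‖) ∧
    (∀ u : V, u - ω ∈ Wmᗮ →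
      ‖u - (Submodule.orthogonalProjectionOnto Vn u : V)‖
        = ‖ustar - (Submodule.orthogonalProjectionOnto Vn ustar : V)‖ → u = ustar) :=
  pbdw_explicit_unique_minimizer_general Vn Wm hβ ω hω vstar hvstar ustar hustar
end
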